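/- Let B = B_{n,m} be a bipath poset. The set of intervals of B is the disjoint union {B} ⊔ 𝕃(B) ⊔ ℝ(B) ⊔ 𝕌(B) ⊔ 𝔻(B), where: 𝕃(B) consists of the subsets [0̂,t]∪[0̂,s] with t∈U, s∈D, s,t≠1̂ (the intervals [0̂,t] and [0̂,s] being taken in the chains U and D respectively); ℝ(B) consists of the subsets [s,1̂]∪[t,1̂] with s∈U, t∈D, s,t≠0̂; 𝕌(B) consists of the intervals [s,t] of the chain U with s,t∉{0̂,1̂}; and 𝔻(B) consists of the intervals [t,s] of the chain D with s,t∉{0̂,1̂}. -/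

import Mathlib

open Classical
section IntervalDefs

variable {P : Type} [PartialOrder P]

/-- Convexity of a subset of a poset. -/
def IsConvex (I : Set P) : Prop :=
  ∀ ⦃a b z : P⦄, a ∈ I → b ∈ I → a ≤ z → z ≤ b → z ∈ I

/-- Connectivity of a subset of a poset: any two points are joined by a finite sequence of
consecutively comparable points inside the subset. -/
def IsConnectedSet (I : Set P) : Prop :=
  ∀ ⦃a⦄, a ∈ I → ∀ ⦃b⦄, b ∈ I →
    Relation.ReflTransGen (fun x y => x ∈ I ∧ y ∈ I ∧ (x ≤ y ∨ y ≤ x)) a b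

/-- An interval of a poset: a nonempty convex connected subset. -/
def IsInterval (I : Set P) : Prop :=
  I.Nonempty ∧ IsConvex I ∧ IsConnectedSet I

end IntervalDefs
/-- The underlying type of the bipath poset `B_{n,m}`:
a global minimum `bot = 0̂`, an upper path `1, …, n`, a lower path `1', …, m'`,
and a global maximum `top = 1̂`. -/
inductive Bipath (n m : ℕ) : Type where
  | bot : Bipath n m
  | up : Fin n → Bipath n m
  | down : Fin m → Bipath n m
  | top : Bipath n m
deriving DecidableEq

namespace Bipath

variable {n m : ℕ}

/-- Auxiliary embedding of the bipath poset into `ℕ × ℕ` (with the product order),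
used to define its partial order, which is generated by
`0̂ < 1 < ⋯ < n < 1̂` and `0̂ < 1' < ⋯ < m' < 1̂`. -/
def toPair : Bipath n m → ℕ × ℕ
  | .bot => (0, 0)
  | .up i => (i.1 + 1, 0)
  | .down j => (0, j.1 + 1)
  | .top => (n + 1, m + 1)

theorem toPair_injective : Function.Injective (toPair (n := n) (m := m)) := by
  intro x y h
  cases x <;> cases y <;>
    simp only [toPair, Prod.mk.injEq] at h <;>
    first
      | rfl
      | (exact absurd h (by omega))
      | (obtain ⟨h1, h2⟩ := h; congr 1; exact Fin.ext (by omega))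

instance : PartialOrder (Bipath n m) := PartialOrder.lift toPair toPair_injective

theorem le_iff_toPair {x y : Bipath n m} : x ≤ y ↔ toPair x ≤ toPair y := Iff.rfl

theorem bot_le' (x : Bipath n m) : (Bipath.bot : Bipath n m) ≤ x := by
  rw [le_iff_toPair, Prod.le_def]
  exact ⟨Nat.zero_le _, Nat.zero_le _⟩

theorem le_top' (x : Bipath n m) : x ≤ (Bipath.top : Bipath n m) := by
  rw [le_iff_toPair, Prod.le_def]
  cases x with
  | bot => exact ⟨Nat.zero_le _, Nat.zero_le _⟩
  | up i => have := i.isLt; exact ⟨by simp only [toPair]; omega, by simp only [toPair]; omega⟩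
  | down j => have := j.isLt; exact ⟨by simp only [toPair]; omega, by simp only [toPair]; omega⟩
  | top => exact ⟨le_refl _, le_refl _⟩

theorem up_le_up {i j : Fin n} : (Bipath.up i : Bipath n m) ≤ .up j ↔ i ≤ j := by
  rw [le_iff_toPair, Prod.le_def]
  simp only [toPair, Fin.le_def]
  omega

theorem down_le_down {i j : Fin m} : (Bipath.down i : Bipath n m) ≤ .down j ↔ i ≤ j := by
  rw [le_iff_toPair, Prod.le_def]
  simp only [toPair, Fin.le_def]
  omega

theorem not_up_le_down {i : Fin n} {j : Fin m} : ¬ (Bipath.up i : Bipath n m) ≤ .down j := by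
  rw [le_iff_toPair, Prod.le_def]
  simp only [toPair]
  omega

theorem not_down_le_up {j : Fin m} {i : Fin n} : ¬ (Bipath.down j : Bipath n m) ≤ .up i := by
  rw [le_iff_toPair, Prod.le_def]
  simp only [toPair]
  omega

theorem not_up_le_bot {i : Fin n} : ¬ (Bipath.up i : Bipath n m) ≤ .bot := by
  rw [le_iff_toPair, Prod.le_def]
  simp only [toPair]
  omega

theorem not_down_le_bot {j : Fin m} : ¬ (Bipath.down j : Bipath n m) ≤ .bot := by
  rw [le_iff_toPair, Prod.le_def]
  simp only [toPair]
  omega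

theorem not_top_le_bot : ¬ (Bipath.top : Bipath n m) ≤ .bot := by
  rw [le_iff_toPair, Prod.le_def]
  simp only [toPair]
  omega

theorem not_top_le_up {i : Fin n} : ¬ (Bipath.top : Bipath n m) ≤ .up i := by
  rw [le_iff_toPair, Prod.le_def]
  simp only [toPair]
  omega

theorem not_top_le_down {j : Fin m} : ¬ (Bipath.top : Bipath n m) ≤ .down j := by
  rw [le_iff_toPair, Prod.le_def]
  simp only [toPair]
  omega

instance : Finite (Bipath n m) := by
  apply Finite.of_surjective
    (fun x : (Unit ⊕ Fin n) ⊕ (Fin m ⊕ Unit) =>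
      match x with
      | .inl (.inl _) => (Bipath.bot : Bipath n m)
      | .inl (.inr i) => .up i
      | .inr (.inl j) => .down j
      | .inr (.inr _) => .top)
  intro b
  cases b with
  | bot => exact ⟨.inl (.inl ()), rfl⟩
  | up i => exact ⟨.inl (.inr i), rfl⟩
  | down j => exact ⟨.inr (.inl j), rfl⟩
  | top => exact ⟨.inr (.inr ()), rfl⟩

end Bipath

variable (n m : ℕ)

/-- The family `𝕃(B)` of subsets `[0̂, t] ∪ [0̂, s]` with `t ∈ U`, `s ∈ D`, `s, t ≠ 1̂`. -/
def setL : Set (Set (Bipath n m)) :=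
  {I | ∃ t s : Bipath n m,
    (t = Bipath.bot ∨ ∃ i, t = Bipath.up i) ∧
    (s = Bipath.bot ∨ ∃ j, s = Bipath.down j) ∧
    I = Set.Icc Bipath.bot t ∪ Set.Icc Bipath.bot s}

/-- The family `ℝ(B)` of subsets `[s, 1̂] ∪ [t, 1̂]` with `s ∈ U`, `t ∈ D`, `s, t ≠ 0̂`. -/
def setR : Set (Set (Bipath n m)) :=
  {I | ∃ s t : Bipath n m,
    (s = Bipath.top ∨ ∃ i, s = Bipath.up i) ∧
    (t = Bipath.top ∨ ∃ j, t = Bipath.down j) ∧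
    I = Set.Icc s Bipath.top ∪ Set.Icc t Bipath.top}

/-- The family `𝕌(B)` of intervals `[s, t]` of the upper path with `s, t ∉ {0̂, 1̂}`. -/
def setU : Set (Set (Bipath n m)) :=
  {I | ∃ i1 i2 : Fin n, i1 ≤ i2 ∧ I = Set.Icc (Bipath.up i1) (Bipath.up i2)}

/-- The family `𝔻(B)` of intervals `[t, s]` of the lower path with `s, t ∉ {0̂, 1̂}`. -/
def setD : Set (Set (Bipath n m)) :=
  {I | ∃ j1 j2 : Fin m, j1 ≤ j2 ∧ I = Set.Icc (Bipath.down j1) (Bipath.down j2)}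

variable {n m : ℕ}
-- Auxiliary lemmas

theorem Bipath.eq_up_of_between {i1 i2 : Fin n} {x : Bipath n m}
    (h1 : Bipath.up i1 ≤ x) (h2 : x ≤ Bipath.up i2) : ∃ i, x = Bipath.up i := by
  cases x with
  | bot => exact absurd h1 Bipath.not_up_le_bot
  | up i => exact ⟨i, rfl⟩
  | down j => exact absurd h1 Bipath.not_up_le_down
  | top => exact absurd h2 Bipath.not_top_le_up

theorem Bipath.eq_down_of_between {j1 j2 : Fin m} {x : Bipath n m}
    (h1 : Bipath.down j1 ≤ x) (h2 : x ≤ Bipath.down j2) : ∃ j, x = Bipath.down j := by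
  cases x with
  | bot => exact absurd h1 Bipath.not_down_le_bot
  | up i => exact absurd h1 Bipath.not_down_le_up
  | down j => exact ⟨j, rfl⟩
  | top => exact absurd h2 Bipath.not_top_le_down

theorem L_bot_mem {I : Set (Bipath n m)} (h : I ∈ setL n m) : Bipath.bot ∈ I := by
  obtain ⟨t, s, _, _, rfl⟩ := h
  exact Or.inl ⟨le_refl _, Bipath.bot_le' t⟩

theorem L_not_top {I : Set (Bipath n m)} (h : I ∈ setL n m) : Bipath.top ∉ I := by
  obtain ⟨t, s, ht, hs, rfl⟩ := h
  rintro (⟨-, h2⟩ | ⟨-, h2⟩)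
  · rcases ht with rfl | ⟨i, rfl⟩
    · exact Bipath.not_top_le_bot h2
    · exact Bipath.not_top_le_up h2
  · rcases hs with rfl | ⟨j, rfl⟩
    · exact Bipath.not_top_le_bot h2
    · exact Bipath.not_top_le_down h2

theorem R_top_mem {I : Set (Bipath n m)} (h : I ∈ setR n m) : Bipath.top ∈ I := by
  obtain ⟨s, t, _, _, rfl⟩ := h
  exact Or.inl ⟨Bipath.le_top' s, le_refl _⟩

theorem R_not_bot {I : Set (Bipath n m)} (h : I ∈ setR n m) : Bipath.bot ∉ I := by
  obtain ⟨s, t, hs, ht, rfl⟩ := h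
  rintro (⟨h2, -⟩ | ⟨h2, -⟩)
  · rcases hs with rfl | ⟨i, rfl⟩
    · exact Bipath.not_top_le_bot h2
    · exact Bipath.not_up_le_bot h2
  · rcases ht with rfl | ⟨j, rfl⟩
    · exact Bipath.not_top_le_bot h2
    · exact Bipath.not_down_le_bot h2

theorem U_all_up {I : Set (Bipath n m)} (h : I ∈ setU n m) :
    ∀ x ∈ I, ∃ i, x = Bipath.up i := by
  obtain ⟨i1, i2, _, rfl⟩ := h
  exact fun x hx => Bipath.eq_up_of_between hx.1 hx.2

theorem U_up_mem {I : Set (Bipath n m)} (h : I ∈ setU n m) :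
    ∃ i, Bipath.up i ∈ I := by
  obtain ⟨i1, i2, h12, rfl⟩ := h
  exact ⟨i1, ⟨le_refl _, Bipath.up_le_up.mpr h12⟩⟩

theorem D_all_down {I : Set (Bipath n m)} (h : I ∈ setD n m) :
    ∀ x ∈ I, ∃ j, x = Bipath.down j := by
  obtain ⟨j1, j2, _, rfl⟩ := h
  exact fun x hx => Bipath.eq_down_of_between hx.1 hx.2

theorem D_down_mem {I : Set (Bipath n m)} (h : I ∈ setD n m) :
    ∃ j, Bipath.down j ∈ I := by
  obtain ⟨j1, j2, h12, rfl⟩ := h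
  exact ⟨j1, ⟨le_refl _, Bipath.down_le_down.mpr h12⟩⟩

theorem U_not_bot {I : Set (Bipath n m)} (h : I ∈ setU n m) : Bipath.bot ∉ I := by
  intro hb
  obtain ⟨i, hi⟩ := U_all_up h _ hb
  exact nomatch hi

theorem U_not_top {I : Set (Bipath n m)} (h : I ∈ setU n m) : Bipath.top ∉ I := by
  intro hb
  obtain ⟨i, hi⟩ := U_all_up h _ hb
  exact nomatch hi

theorem D_not_bot {I : Set (Bipath n m)} (h : I ∈ setD n m) : Bipath.bot ∉ I := by
  intro hb
  obtain ⟨j, hj⟩ := D_all_down h _ hb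
  exact nomatch hj

theorem D_not_top {I : Set (Bipath n m)} (h : I ∈ setD n m) : Bipath.top ∉ I := by
  intro hb
  obtain ⟨j, hj⟩ := D_all_down h _ hb
  exact nomatch hj

-- intervals

theorem univ_interval : IsInterval (Set.univ : Set (Bipath n m)) := by
  refine ⟨⟨Bipath.bot, trivial⟩, fun a b z _ _ _ _ => trivial, ?_⟩
  intro a _ b _
  exact Relation.ReflTransGen.head ⟨trivial, trivial, Or.inr (Bipath.bot_le' a)⟩
    (Relation.ReflTransGen.single ⟨trivial, trivial, Or.inl (Bipath.bot_le' b)⟩)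

theorem L_interval {I : Set (Bipath n m)} (h : I ∈ setL n m) : IsInterval I := by
  have hbot := L_bot_mem h
  obtain ⟨t, s, -, -, rfl⟩ := h
  refine ⟨⟨_, hbot⟩, ?_, ?_⟩
  · intro a b z _ hb _ hzb
    rcases hb with ⟨-, hbt⟩ | ⟨-, hbs⟩
    · exact Or.inl ⟨Bipath.bot_le' z, le_trans hzb hbt⟩
    · exact Or.inr ⟨Bipath.bot_le' z, le_trans hzb hbs⟩
  · intro a ha b hb
    exact Relation.ReflTransGen.head ⟨ha, hbot, Or.inr (Bipath.bot_le' a)⟩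
      (Relation.ReflTransGen.single ⟨hbot, hb, Or.inl (Bipath.bot_le' b)⟩)

theorem R_interval {I : Set (Bipath n m)} (h : I ∈ setR n m) : IsInterval I := by
  have htop := R_top_mem h
  obtain ⟨s, t, -, -, rfl⟩ := h
  refine ⟨⟨_, htop⟩, ?_, ?_⟩
  · intro a b z ha _ haz _
    rcases ha with ⟨has, -⟩ | ⟨hat, -⟩
    · exact Or.inl ⟨le_trans has haz, Bipath.le_top' z⟩
    · exact Or.inr ⟨le_trans hat haz, Bipath.le_top' z⟩
  · intro a ha b hb
    exact Relation.ReflTransGen.head ⟨ha, htop, Or.inl (Bipath.le_top' a)⟩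
      (Relation.ReflTransGen.single ⟨htop, hb, Or.inr (Bipath.le_top' b)⟩)

theorem U_interval {I : Set (Bipath n m)} (h : I ∈ setU n m) : IsInterval I := by
  obtain ⟨i1, i2, h12, rfl⟩ := h
  refine ⟨⟨Bipath.up i1, ⟨le_refl _, Bipath.up_le_up.mpr h12⟩⟩, ?_, ?_⟩
  · intro a b z ha hb haz hzb
    exact ⟨le_trans ha.1 haz, le_trans hzb hb.2⟩
  · intro a ha b hb
    obtain ⟨ia, rfl⟩ := Bipath.eq_up_of_between ha.1 ha.2
    obtain ⟨ib, rfl⟩ := Bipath.eq_up_of_between hb.1 hb.2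
    refine Relation.ReflTransGen.single ⟨ha, hb, ?_⟩
    rcases le_total ia ib with h | h
    · exact Or.inl (Bipath.up_le_up.mpr h)
    · exact Or.inr (Bipath.up_le_up.mpr h)

theorem D_interval {I : Set (Bipath n m)} (h : I ∈ setD n m) : IsInterval I := by
  obtain ⟨j1, j2, h12, rfl⟩ := h
  refine ⟨⟨Bipath.down j1, ⟨le_refl _, Bipath.down_le_down.mpr h12⟩⟩, ?_, ?_⟩
  · intro a b z ha hb haz hzb
    exact ⟨le_trans ha.1 haz, le_trans hzb hb.2⟩
  · intro a ha b hb
    obtain ⟨ja, rfl⟩ := Bipath.eq_down_of_between ha.1 ha.2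
    obtain ⟨jb, rfl⟩ := Bipath.eq_down_of_between hb.1 hb.2
    refine Relation.ReflTransGen.single ⟨ha, hb, ?_⟩
    rcases le_total ja jb with h | h
    · exact Or.inl (Bipath.down_le_down.mpr h)
    · exact Or.inr (Bipath.down_le_down.mpr h)

-- classification

theorem interval_classify {I : Set (Bipath n m)} (hI : IsInterval I) :
    I = Set.univ ∨ I ∈ setL n m ∨ I ∈ setR n m ∨ I ∈ setU n m ∨ I ∈ setD n m := by
  classical
  obtain ⟨hne, hconv, hconn⟩ := hI
  by_cases hbot : Bipath.bot ∈ I <;> by_cases htop : Bipath.top ∈ I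
  · left
    ext x
    simp only [Set.mem_univ, iff_true]
    exact hconv hbot htop (Bipath.bot_le' x) (Bipath.le_top' x)
  · -- bot ∈ I, top ∉ I : setL
    right; left
    have ht : ∃ t : Bipath n m, (t = Bipath.bot ∨ ∃ i, t = Bipath.up i) ∧ t ∈ I ∧
        ∀ i : Fin n, Bipath.up i ∈ I → Bipath.up i ≤ t := by
      set F : Finset (Fin n) := Finset.univ.filter (fun i => Bipath.up i ∈ I) with hFdef
      have hFmem : ∀ i, i ∈ F ↔ Bipath.up i ∈ I := by
        intro i; simp [hFdef]
      by_cases hF : F.Nonempty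
      · refine ⟨Bipath.up (F.max' hF), Or.inr ⟨_, rfl⟩, (hFmem _).1 (F.max'_mem hF), ?_⟩
        intro i hi
        exact Bipath.up_le_up.mpr (F.le_max' i ((hFmem i).2 hi))
      · exact ⟨Bipath.bot, Or.inl rfl, hbot,
          fun i hi => absurd ⟨i, (hFmem i).2 hi⟩ hF⟩
    have hs : ∃ s : Bipath n m, (s = Bipath.bot ∨ ∃ j, s = Bipath.down j) ∧ s ∈ I ∧
        ∀ j : Fin m, Bipath.down j ∈ I → Bipath.down j ≤ s := by
      set G : Finset (Fin m) := Finset.univ.filter (fun j => Bipath.down j ∈ I) with hGdef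
      have hGmem : ∀ j, j ∈ G ↔ Bipath.down j ∈ I := by
        intro j; simp [hGdef]
      by_cases hG : G.Nonempty
      · refine ⟨Bipath.down (G.max' hG), Or.inr ⟨_, rfl⟩, (hGmem _).1 (G.max'_mem hG), ?_⟩
        intro j hj
        exact Bipath.down_le_down.mpr (G.le_max' j ((hGmem j).2 hj))
      · exact ⟨Bipath.bot, Or.inl rfl, hbot,
          fun j hj => absurd ⟨j, (hGmem j).2 hj⟩ hG⟩
    obtain ⟨t, htform, htI, htmax⟩ := ht
    obtain ⟨s, hsform, hsI, hsmax⟩ := hs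
    refine ⟨t, s, htform, hsform, ?_⟩
    ext x
    constructor
    · intro hx
      cases x with
      | bot => exact Or.inl ⟨le_refl _, Bipath.bot_le' t⟩
      | up i => exact Or.inl ⟨Bipath.bot_le' _, htmax i hx⟩
      | down j => exact Or.inr ⟨Bipath.bot_le' _, hsmax j hx⟩
      | top => exact absurd hx htop
    · rintro (⟨-, h2⟩ | ⟨-, h2⟩)
      · exact hconv hbot htI (Bipath.bot_le' x) h2
      · exact hconv hbot hsI (Bipath.bot_le' x) h2
  · -- top ∈ I, bot ∉ I : setR
    right; right; left
    have ht : ∃ s : Bipath n m, (s = Bipath.top ∨ ∃ i, s = Bipath.up i) ∧ s ∈ I ∧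
        ∀ i : Fin n, Bipath.up i ∈ I → s ≤ Bipath.up i := by
      set F : Finset (Fin n) := Finset.univ.filter (fun i => Bipath.up i ∈ I) with hFdef
      have hFmem : ∀ i, i ∈ F ↔ Bipath.up i ∈ I := by
        intro i; simp [hFdef]
      by_cases hF : F.Nonempty
      · refine ⟨Bipath.up (F.min' hF), Or.inr ⟨_, rfl⟩, (hFmem _).1 (F.min'_mem hF), ?_⟩
        intro i hi
        exact Bipath.up_le_up.mpr (F.min'_le i ((hFmem i).2 hi))
      · exact ⟨Bipath.top, Or.inl rfl, htop,
          fun i hi => absurd ⟨i, (hFmem i).2 hi⟩ hF⟩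
    have hs : ∃ t : Bipath n m, (t = Bipath.top ∨ ∃ j, t = Bipath.down j) ∧ t ∈ I ∧
        ∀ j : Fin m, Bipath.down j ∈ I → t ≤ Bipath.down j := by
      set G : Finset (Fin m) := Finset.univ.filter (fun j => Bipath.down j ∈ I) with hGdef
      have hGmem : ∀ j, j ∈ G ↔ Bipath.down j ∈ I := by
        intro j; simp [hGdef]
      by_cases hG : G.Nonempty
      · refine ⟨Bipath.down (G.min' hG), Or.inr ⟨_, rfl⟩, (hGmem _).1 (G.min'_mem hG), ?_⟩
        intro j hj
        exact Bipath.down_le_down.mpr (G.min'_le j ((hGmem j).2 hj))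
      · exact ⟨Bipath.top, Or.inl rfl, htop,
          fun j hj => absurd ⟨j, (hGmem j).2 hj⟩ hG⟩
    obtain ⟨s, hsform, hsI, hsmin⟩ := ht
    obtain ⟨t, htform, htI, htmin⟩ := hs
    refine ⟨s, t, hsform, htform, ?_⟩
    ext x
    constructor
    · intro hx
      cases x with
      | bot => exact absurd hx hbot
      | up i => exact Or.inl ⟨hsmin i hx, Bipath.le_top' _⟩
      | down j => exact Or.inr ⟨htmin j hx, Bipath.le_top' _⟩
      | top => exact Or.inl ⟨Bipath.le_top' s, le_refl _⟩
    · rintro (⟨h1, -⟩ | ⟨h1, -⟩)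
      · exact hconv hsI htop h1 (Bipath.le_top' x)
      · exact hconv htI htop h1 (Bipath.le_top' x)
  · -- bot ∉ I, top ∉ I : setU or setD
    have chain_up : ∀ i0 : Fin n, Bipath.up i0 ∈ I → ∀ x ∈ I, ∃ i, x = Bipath.up i := by
      intro i0 h0 x hx
      have h := hconn h0 hx
      clear hx
      induction h with
      | refl => exact ⟨i0, rfl⟩
      | tail _ step ih =>
        obtain ⟨i', rfl⟩ := ih
        obtain ⟨-, hbI, hcmp⟩ := step
        rename_i b _
        cases b with
        | bot => exact absurd hbI hbot
        | top => exact absurd hbI htop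
        | up i => exact ⟨i, rfl⟩
        | down j =>
          rcases hcmp with h | h
          · exact absurd h Bipath.not_up_le_down
          · exact absurd h Bipath.not_down_le_up
    have chain_down : ∀ j0 : Fin m, Bipath.down j0 ∈ I → ∀ x ∈ I, ∃ j, x = Bipath.down j := by
      intro j0 h0 x hx
      have h := hconn h0 hx
      clear hx
      induction h with
      | refl => exact ⟨j0, rfl⟩
      | tail _ step ih =>
        obtain ⟨j', rfl⟩ := ih
        obtain ⟨-, hbI, hcmp⟩ := step
        rename_i b _
        cases b with
        | bot => exact absurd hbI hbot
        | top => exact absurd hbI htop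
        | down j => exact ⟨j, rfl⟩
        | up i =>
          rcases hcmp with h | h
          · exact absurd h Bipath.not_down_le_up
          · exact absurd h Bipath.not_up_le_down
    obtain ⟨a, ha⟩ := hne
    cases a with
    | bot => exact absurd ha hbot
    | top => exact absurd ha htop
    | up i0 =>
      right; right; right; left
      set F : Finset (Fin n) := Finset.univ.filter (fun i => Bipath.up i ∈ I) with hFdef
      have hFmem : ∀ i, i ∈ F ↔ Bipath.up i ∈ I := by
        intro i; simp [hFdef]
      have hF : F.Nonempty := ⟨i0, (hFmem i0).2 ha⟩
      refine ⟨F.min' hF, F.max' hF, F.min'_le _ (F.max'_mem hF), ?_⟩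
      have hminI : Bipath.up (F.min' hF) ∈ I := (hFmem _).1 (F.min'_mem hF)
      have hmaxI : Bipath.up (F.max' hF) ∈ I := (hFmem _).1 (F.max'_mem hF)
      ext x
      constructor
      · intro hx
        obtain ⟨i, rfl⟩ := chain_up i0 ha x hx
        have hiF : i ∈ F := (hFmem i).2 hx
        exact ⟨Bipath.up_le_up.mpr (F.min'_le i hiF), Bipath.up_le_up.mpr (F.le_max' i hiF)⟩
      · intro hx
        exact hconv hminI hmaxI hx.1 hx.2
    | down j0 =>
      right; right; right; right
      set G : Finset (Fin m) := Finset.univ.filter (fun j => Bipath.down j ∈ I) with hGdef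
      have hGmem : ∀ j, j ∈ G ↔ Bipath.down j ∈ I := by
        intro j; simp [hGdef]
      have hG : G.Nonempty := ⟨j0, (hGmem j0).2 ha⟩
      refine ⟨G.min' hG, G.max' hG, G.min'_le _ (G.max'_mem hG), ?_⟩
      have hminI : Bipath.down (G.min' hG) ∈ I := (hGmem _).1 (G.min'_mem hG)
      have hmaxI : Bipath.down (G.max' hG) ∈ I := (hGmem _).1 (G.max'_mem hG)
      ext x
      constructor
      · intro hx
        obtain ⟨j, rfl⟩ := chain_down j0 ha x hx
        have hjG : j ∈ G := (hGmem j).2 hx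
        exact ⟨Bipath.down_le_down.mpr (G.min'_le j hjG),
          Bipath.down_le_down.mpr (G.le_max' j hjG)⟩
      · intro hx
        exact hconv hminI hmaxI hx.1 hx.2

/-- The set of intervals of the bipath poset `B = B_{n,m}` is the disjoint
union `{B} ⊔ 𝕃(B) ⊔ ℝ(B) ⊔ 𝕌(B) ⊔ 𝔻(B)`. -/
theorem statement1 (hn : 0 < n) (hm : 0 < m) :
    ({I : Set (Bipath n m) | IsInterval I}
        = {Set.univ} ∪ setL n m ∪ setR n m ∪ setU n m ∪ setD n m) ∧
    Disjoint ({Set.univ} : Set (Set (Bipath n m))) (setL n m) ∧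
    Disjoint ({Set.univ} : Set (Set (Bipath n m))) (setR n m) ∧
    Disjoint ({Set.univ} : Set (Set (Bipath n m))) (setU n m) ∧
    Disjoint ({Set.univ} : Set (Set (Bipath n m))) (setD n m) ∧
    Disjoint (setL n m) (setR n m) ∧
    Disjoint (setL n m) (setU n m) ∧
    Disjoint (setL n m) (setD n m) ∧
    Disjoint (setR n m) (setU n m) ∧
    Disjoint (setR n m) (setD n m) ∧
    Disjoint (setU n m) (setD n m) := by
  refine ⟨?_, ?_, ?_, ?_, ?_, ?_, ?_, ?_, ?_, ?_, ?_⟩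
  · ext I
    simp only [Set.mem_setOf_eq, Set.mem_union, Set.mem_singleton_iff]
    constructor
    · intro hI
      rcases interval_classify hI with h | h | h | h | h
      · exact Or.inl (Or.inl (Or.inl (Or.inl h)))
      · exact Or.inl (Or.inl (Or.inl (Or.inr h)))
      · exact Or.inl (Or.inl (Or.inr h))
      · exact Or.inl (Or.inr h)
      · exact Or.inr h
    · rintro ((((rfl | h) | h) | h) | h)
      · exact univ_interval
      · exact L_interval h
      · exact R_interval h
      · exact U_interval h
      · exact D_interval h
  · refine Set.disjoint_left.mpr ?_
    rintro I rfl h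
    exact L_not_top h (Set.mem_univ _)
  · refine Set.disjoint_left.mpr ?_
    rintro I rfl h
    exact R_not_bot h (Set.mem_univ _)
  · refine Set.disjoint_left.mpr ?_
    rintro I rfl h
    exact U_not_bot h (Set.mem_univ _)
  · refine Set.disjoint_left.mpr ?_
    rintro I rfl h
    exact D_not_bot h (Set.mem_univ _)
  · refine Set.disjoint_left.mpr fun I h1 h2 => ?_
    exact R_not_bot h2 (L_bot_mem h1)
  · refine Set.disjoint_left.mpr fun I h1 h2 => ?_
    exact U_not_bot h2 (L_bot_mem h1)
  · refine Set.disjoint_left.mpr fun I h1 h2 => ?_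
    exact D_not_bot h2 (L_bot_mem h1)
  · refine Set.disjoint_left.mpr fun I h1 h2 => ?_
    exact U_not_top h2 (R_top_mem h1)
  · refine Set.disjoint_left.mpr fun I h1 h2 => ?_
    exact D_not_top h2 (R_top_mem h1)
  · refine Set.disjoint_left.mpr fun I h1 h2 => ?_
    obtain ⟨i, hi⟩ := U_up_mem h1
    obtain ⟨j, hj⟩ := D_all_down h2 _ hi
    exact nomatch hj
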